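/- In Kitaev's post-processing iteration, at each step k < n exactly one of the two candidates satisfies the selection condition: given β_k with |2^{k-1}φ - β_k|_{mod 1} < 1/8 and bits x_{k+1}, x_{k+2} with |0.x_{k+1}x_{k+2} - 2^k φ|_{mod 1} < 1/8 (say), exactly one bit b ∈ {0,1} satisfies |0.b x_{k+1} x_{k+2} - β_k|_{mod 1} < 1/4. -/

import Mathlib

open Real

/-- Distance from a real number to the nearest integer ("|x| mod 1"). -/
noncomputable def distMod1 (x : ℝ) : ℝ := |x - round x|

/-! Write `z = x₁/2 + x₂/4 - 2φ`, so the candidate `b/2 + x₁/4 + x₂/8 - β` is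
`b/2 + (φ - β) + z/2`. Halving is two-valued modulo 1: for `b ≡ round z (mod 2)` the number
`b/2 + z/2` lies within `|z|_{mod 1}/2 < 1/16` of an integer, so that candidate is within
`1/8 + 1/16 < 1/4` of one. The two candidates differ by `1/2`, and `|·|_{mod 1}` is the norm of
`ℝ/ℤ`, with `|1/2|_{mod 1} = 1/2`; by the triangle inequality they cannot both be within
`1/4`. -/

lemma distMod1_eq_norm (x : ℝ) : distMod1 x = ‖(x : UnitAddCircle)‖ :=
  UnitAddCircle.norm_eq.symm

lemma distMod1_add_le (x y : ℝ) : distMod1 (x + y) ≤ distMod1 x + distMod1 y := by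
  simpa only [distMod1_eq_norm, AddCircle.coe_add] using norm_add_le _ _

lemma distMod1_sub_le (x y : ℝ) : distMod1 (x - y) ≤ distMod1 x + distMod1 y := by
  simpa only [distMod1_eq_norm, AddCircle.coe_sub] using norm_sub_le _ _

lemma distMod1_int_add (m : ℤ) (x : ℝ) : distMod1 (m + x) = distMod1 x := by
  rw [distMod1, distMod1, round_intCast_add, Int.cast_add]
  ring_nf

lemma distMod1_half : distMod1 (1 / 2) = 1 / 2 := by
  simpa [distMod1_eq_norm] using AddCircle.norm_half_period_eq (1 : ℝ)

lemma distMod1_neg (x : ℝ) : distMod1 (-x) = distMod1 x := by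
  simp only [distMod1_eq_norm, AddCircle.coe_neg, norm_neg]

lemma distMod1_half_sub_round_half_le (z : ℝ) :
    distMod1 (z / 2 - round z / 2) ≤ distMod1 z / 2 := by
  calc distMod1 (z / 2 - round z / 2) ≤ |z / 2 - round z / 2 - ((0 : ℤ) : ℝ)| := round_le _ 0
    _ = distMod1 z / 2 := by
      rw [distMod1, Int.cast_zero, sub_zero, ← sub_div, abs_div, abs_two]

lemma exists_bit_distMod1_half_add_le (y z : ℝ) :
    ∃ b : ℝ, (b = 0 ∨ b = 1) ∧ distMod1 (b / 2 + (y + z / 2)) ≤ distMod1 y + distMod1 z / 2 := by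
  set n := round z
  refine ⟨(n % 2 : ℤ), ?_, ?_⟩
  · rcases Int.emod_two_eq_zero_or_one n with h | h <;> simp [h]
  · have hsplit : ((n % 2 : ℤ) : ℝ) / 2 + (y + z / 2)
        = ((n % 2 + n / 2 : ℤ) : ℝ) + (y + (z / 2 - n / 2)) := by
      have hn : ((n % 2 : ℤ) : ℝ) + 2 * ((n / 2 : ℤ) : ℝ) = n := by
        exact_mod_cast Int.emod_add_mul_ediv n 2
      push_cast
      linarith
    rw [hsplit, distMod1_int_add]
    calc distMod1 (y + (z / 2 - n / 2))
        _ ≤ distMod1 y + distMod1 (z / 2 - n / 2) := distMod1_add_le _ _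
        _ ≤ distMod1 y + distMod1 z / 2 := by gcongr; exact distMod1_half_sub_round_half_le z

lemma eq_of_distMod1_half_add_lt_quarter {b b' x : ℝ} (hb : b = 0 ∨ b = 1) (hb' : b' = 0 ∨ b' = 1)
    (h : distMod1 (b / 2 + x) < 1 / 4) (h' : distMod1 (b' / 2 + x) < 1 / 4) : b = b' := by
  by_contra hne
  have hhalf : distMod1 (b / 2 + x - (b' / 2 + x)) = 1 / 2 := by
    rcases hb with rfl | rfl <;> rcases hb' with rfl | rfl
    · exact absurd rfl hne
    · rw [show (0 : ℝ) / 2 + x - (1 / 2 + x) = -(1 / 2) by ring, distMod1_neg, distMod1_half]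
    · rw [show (1 : ℝ) / 2 + x - (0 / 2 + x) = 1 / 2 by ring, distMod1_half]
    · exact absurd rfl hne
  linarith [distMod1_sub_le (b / 2 + x) (b' / 2 + x)]

theorem stmt_3_general (φ β x₁ x₂ : ℝ)
    (hβapprox : distMod1 (φ - β) < 1 / 8)
    (hnext : distMod1 (x₁ / 2 + x₂ / 4 - 2 * φ) < 1 / 8) :
    ∃! b : ℝ, (b = 0 ∨ b = 1) ∧ distMod1 (b / 2 + x₁ / 4 + x₂ / 8 - β) < 1 / 4 := by
  have hsplit : ∀ b : ℝ,
      b / 2 + x₁ / 4 + x₂ / 8 - β = b / 2 + ((φ - β) + (x₁ / 2 + x₂ / 4 - 2 * φ) / 2) :=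
    fun b => by ring
  simp only [hsplit]
  obtain ⟨b, hb, hdist⟩ := exists_bit_distMod1_half_add_le (φ - β) (x₁ / 2 + x₂ / 4 - 2 * φ)
  refine existsUnique_of_exists_of_unique ⟨b, hb, by linarith⟩ ?_
  rintro b b' ⟨hb, h⟩ ⟨hb', h'⟩
  exact eq_of_distMod1_half_add_lt_quarter hb hb' h h'

/-- At each step of Kitaev's post-processing, exactly one candidate bit works:
given β ∈ {0/8,…,7/8} with |φ - β|_{mod 1} < 1/8 (where φ stands for the shifted phase
2^{k-1}φ) and bits x₁, x₂ with |x₁/2 + x₂/4 - 2φ|_{mod 1} < 1/8, there is exactly one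
bit b ∈ {0,1} with |b/2 + x₁/4 + x₂/8 - β|_{mod 1} < 1/4. -/
theorem stmt_3 (φ β x₁ x₂ : ℝ) (hβ : ∃ j : Fin 8, β = (j : ℝ) / 8)
    (hx₁ : x₁ = 0 ∨ x₁ = 1) (hx₂ : x₂ = 0 ∨ x₂ = 1)
    (hβapprox : distMod1 (φ - β) < 1 / 8)
    (hnext : distMod1 (x₁ / 2 + x₂ / 4 - 2 * φ) < 1 / 8) :
    ∃! b : ℝ, (b = 0 ∨ b = 1) ∧ distMod1 (b / 2 + x₁ / 4 + x₂ / 8 - β) < 1 / 4 :=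
  stmt_3_general φ β x₁ x₂ hβapprox hnext
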